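/- arXiv:1605.08305 — 6 statements merged into one kernel-verified Lean document; each statement's English description precedes it below -/
import Mathlib

section
/- If a pre-cubical set K is proper, then its non-looping length covering K̃ is also proper. -/
/-- A pre-cubical set: a family of sets of `n`-cubes with face maps
`dᵢᵉ : K[n+1] → K[n]` (indices `i` are 0-based here) satisfying the
pre-cubical relations `dᵢᵉ dⱼᶯ = dⱼ₋₁ᶯ dᵢᵉ` for `i < j`. -/
structure PCS where
  cube : ℕ → Type
  face : Bool → ∀ {n : ℕ}, Fin (n + 1) → cube (n + 1) → cube n
  comm : ∀ {n : ℕ} (ε η : Bool) (i : Fin (n + 1)) (j : Fin (n + 2)),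
    (i : ℕ) < (j : ℕ) → ∀ c : cube (n + 2),
    face ε i (face η j c) =
      face η ⟨(j : ℕ) - 1, by omega⟩ (face ε ⟨(i : ℕ), by omega⟩ c)

/-- The number of `*`'s (encoded as `none`) of a function `f : {1,…,n} → {0,1,*}`. -/
def numStars {n : ℕ} (f : Fin n → Option Bool) : ℕ := ∑ i, if f i = none then 1 else 0

lemma numStars_castSucc {n : ℕ} (f : Fin (n + 1) → Option Bool) :
    numStars f = numStars (f ∘ Fin.castSucc) + (if f (Fin.last n) = none then 1 else 0) := by
  unfold numStars
  rw [Fin.sum_univ_castSucc]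
  rfl

/-- Auxiliary for `dface`: the last `k` coordinates are untouched. -/
def PCS.dfaceAux (K : PCS) : ∀ (n k : ℕ) (f : Fin n → Option Bool),
    K.cube (n + k) → K.cube (numStars f + k)
  | 0, _, _, c => cast (congrArg K.cube (by simp [numStars])) c
  | n + 1, k, f, c =>
    match h : f (Fin.last n) with
    | some ε =>
        cast (congrArg K.cube (by rw [numStars_castSucc f, h]; simp))
          (K.dfaceAux n k (f ∘ Fin.castSucc)
            (K.face ε ⟨n, by omega⟩ (cast (congrArg K.cube (by omega)) c)))
    | none =>
        cast (congrArg K.cube (by rw [numStars_castSucc f, h]; simp; omega))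
          (K.dfaceAux n (k + 1) (f ∘ Fin.castSucc) (cast (congrArg K.cube (by omega)) c))

/-- `d_f(c)` : the composition `d₁^{f(1)} ⋯ d_n^{f(n)}` of face maps, where
`f i = some ε` means apply `dᵢᵉ` and `f i = none` means `dᵢ^*` (identity). -/
def PCS.dface (K : PCS) {n : ℕ} (f : Fin n → Option Bool) (c : K.cube n) :
    K.cube (numStars f) :=
  cast (congrArg K.cube (by omega)) (K.dfaceAux n 0 f (cast (congrArg K.cube (by omega)) c))

/-- `dᵉ(c)`: the extreme vertex of a cube. -/
def PCS.extreme (K : PCS) (ε : Bool) {n : ℕ} (c : K.cube n) : K.cube 0 :=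
  cast (congrArg K.cube (by simp [numStars])) (K.dface (fun _ => some ε) c)

/-- A pre-cubical set is proper if cubes are distinguished by their
pairs of extreme vertices. -/
def PCS.Proper (K : PCS) : Prop :=
  Function.Injective fun c : Σ n, K.cube n =>
    ({K.extreme false c.2, K.extreme true c.2} : Set (K.cube 0))

/-- The non-looping length covering `K̃` of `K`: `K̃[n] = K[n] × ℤ`,
`dᵢᵉ(c,k) = (dᵢᵉ(c), k+ε)`. -/
def PCS.cover (K : PCS) : PCS where
  cube n := K.cube n × ℤ
  face := fun ε {n} i c => (K.face ε i c.1, c.2 + if ε then 1 else 0)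
  comm := by
    intro n ε η i j hij c
    refine Prod.ext ?_ ?_
    · exact K.comm ε η i j hij c.1
    · dsimp
      ring

/-! The extreme vertices of an `n`-cube `(c, z)` of `K̃` are `(d⁰ c, z)` and `(d¹ c, z + n)`.
Forgetting lengths, properness of `K` recovers `n` and `c`; the lengths of the two vertices
then recover `z`, because a swap of the vertices would force `n = 0`. -/

namespace PCS

def numTrue {n : ℕ} (f : Fin n → Option Bool) : ℤ := ∑ i, if f i = some true then 1 else 0

lemma numTrue_castSucc {n : ℕ} (f : Fin (n + 1) → Option Bool) :
    numTrue f = numTrue (f ∘ Fin.castSucc) + if f (Fin.last n) = some true then 1 else 0 :=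
  Fin.sum_univ_castSucc _

lemma numTrue_const (ε : Bool) (n : ℕ) :
    numTrue (fun _ : Fin n => some ε) = if ε then (n : ℤ) else 0 := by
  cases ε <;> simp [numTrue]

variable (K : PCS)

lemma cast_cover_mk {a b : ℕ} (e : a = b) (c : K.cube a) (z : ℤ) :
    cast (congrArg K.cover.cube e) ((c, z) : K.cover.cube a) =
      ((cast (congrArg K.cube e) c, z) : K.cover.cube b) := by
  subst e; rfl

lemma cover_dfaceAux : ∀ (n k : ℕ) (f : Fin n → Option Bool) (c : K.cube (n + k)) (z : ℤ),
    K.cover.dfaceAux n k f ((c, z) : K.cover.cube (n + k)) =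
      ((K.dfaceAux n k f c, z + numTrue f) : K.cover.cube (numStars f + k))
  | 0, k, f, c, z => by
    have h : numTrue f = 0 := by simp [numTrue]
    erw [dfaceAux, dfaceAux]
    rw [cast_cover_mk, h, add_zero]
    simp [numStars]
  | n + 1, k, f, c, z => by
    erw [dfaceAux, dfaceAux]
    split
    · rename_i ε hf
      have h : numTrue f = numTrue (f ∘ Fin.castSucc) + if ε then 1 else 0 := by
        rw [numTrue_castSucc f, hf]
        cases ε <;> simp
      rw [cast_cover_mk (e := by omega)]
      erw [cover_dfaceAux n k]
      rw [cast_cover_mk (e := by rw [numStars_castSucc f, hf]; simp), h]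
      exact Prod.ext rfl (by ring)
    · rename_i hf
      have h : numTrue f = numTrue (f ∘ Fin.castSucc) := by
        rw [numTrue_castSucc f, hf]
        simp
      rw [cast_cover_mk (e := by omega), cover_dfaceAux n (k + 1),
        cast_cover_mk (e := by rw [numStars_castSucc f, hf]; simp; omega), h]

lemma cover_extreme (ε : Bool) {n : ℕ} (c : K.cube n) (z : ℤ) :
    K.cover.extreme ε ((c, z) : K.cover.cube n) =
      ((K.extreme ε c, z + if ε then (n : ℤ) else 0) : K.cover.cube 0) := by
  unfold extreme dface
  rw [cast_cover_mk (e := by omega), cover_dfaceAux, cast_cover_mk (e := by omega),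
    cast_cover_mk (e := by simp [numStars]), numTrue_const]

end PCS

lemma Prod.snd_eq_of_pair_eq {α : Type*} {a b : α} {z w n : ℤ}
    (h : ({(a, z), (b, z + n)} : Set (α × ℤ)) = {(a, w), (b, w + n)}) : z = w := by
  rcases Set.pair_eq_pair_iff.mp h with ⟨h₁, -⟩ | ⟨h₁, h₂⟩
  · exact (Prod.mk.inj h₁).2
  · have := (Prod.mk.inj h₁).2
    have := (Prod.mk.inj h₂).2
    omega

/-- If `K` is proper, so is its non-looping length covering. -/
theorem stmt2 (K : PCS) (hK : K.Proper) : K.cover.Proper := by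
  rintro ⟨n, c, z⟩ ⟨m, d, w⟩ h
  replace h : ({(K.extreme false c, z), (K.extreme true c, z + n)} : Set (K.cube 0 × ℤ)) =
      {(K.extreme false d, w), (K.extreme true d, w + m)} := by
    simp only [PCS.cover_extreme, Bool.false_eq_true, ↓reduceIte, add_zero] at h
    exact h
  have hvertices := congrArg (Prod.fst '' ·) h
  simp only [Set.image_pair] at hvertices
  obtain ⟨rfl, hcd⟩ := Sigma.mk.inj_iff.mp (hK hvertices)
  cases eq_of_heq hcd
  rw [Prod.snd_eq_of_pair_eq h]
end

section
/- Let K be a pre-cubical set with height function. Define a relation ⪯ on cubes of K as the reflexive-transitive closure of the relations d⁰ᵢ(c) ⪯ c and c ⪯ d¹ᵢ(c). Then ⪯ is a partial order; more precisely, for distinct cubes c ≠ c', c ⪯ c' implies either h(c) < h(c'), or h(c)=h(c') and dim(c) < dim(c'). -/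
/-- A height function on `K`: `h(dᵢᵉ(c)) = h(c) + ε`. -/
def PCS.IsHeight (K : PCS) (h : ∀ {n : ℕ}, K.cube n → ℤ) : Prop :=
  ∀ {n : ℕ} (ε : Bool) (i : Fin (n + 1)) (c : K.cube (n + 1)),
    h (K.face ε i c) = h c + (if ε then 1 else 0)

/-- One step of the relation `⪯`: `d⁰ᵢ(c) ⪯ c` or `c ⪯ d¹ᵢ(c)`. -/
def PCS.precStep (K : PCS) (x y : Σ n, K.cube n) : Prop :=
  ∃ (n : ℕ) (i : Fin (n + 1)) (c : K.cube (n + 1)),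
    (x = ⟨n, K.face false i c⟩ ∧ y = ⟨n + 1, c⟩) ∨
    (x = ⟨n + 1, c⟩ ∧ y = ⟨n, K.face true i c⟩)

/-- `⪯`: the reflexive-transitive closure of `precStep`. -/
def PCS.prec (K : PCS) : (Σ n, K.cube n) → (Σ n, K.cube n) → Prop :=
  Relation.ReflTransGen K.precStep

/-- If `K` has a height function `h`, then `⪯` is a partial
order on the cubes of `K`; more precisely, for distinct cubes `c ≠ c'`,
`c ⪯ c'` implies `h(c) < h(c')`, or `h(c) = h(c')` and `dim(c) < dim(c')`. -/
theorem stmt6 (K : PCS) (h : ∀ {n : ℕ}, K.cube n → ℤ) (hh : K.IsHeight h) :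
    IsPartialOrder (Σ n, K.cube n) K.prec ∧
    ∀ x y : Σ n, K.cube n, x ≠ y → K.prec x y →
      (h x.2 < h y.2 ∨ (h x.2 = h y.2 ∧ x.1 < y.1)) := by
  -- strict measure
  set P : (Σ n, K.cube n) → (Σ n, K.cube n) → Prop :=
    fun x y => h x.2 < h y.2 ∨ (h x.2 = h y.2 ∧ x.1 < y.1) with hP
  have hstep : ∀ x y, K.precStep x y → P x y := by
    rintro x y ⟨n, i, c, ⟨rfl, rfl⟩ | ⟨rfl, rfl⟩⟩
    · right
      constructor
      · simpa using hh false i c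
      · exact Nat.lt_succ_self n
    · left
      have := hh true i c
      simp at this
      simp [this]
  have htrans : ∀ x y z, P x y → P y z → P x z := by
    rintro x y z (h1 | ⟨h1, h1'⟩) (h2 | ⟨h2, h2'⟩)
    · exact Or.inl (h1.trans h2)
    · exact Or.inl (h2 ▸ h1)
    · exact Or.inl (h1 ▸ h2)
    · exact Or.inr ⟨h1.trans h2, h1'.trans h2'⟩
  have hmain : ∀ x y, K.prec x y → x = y ∨ P x y := by
    intro x y hxy
    induction hxy with
    | refl => exact Or.inl rfl
    | tail _ hstep' ih =>
      rcases ih with rfl | hp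
      · exact Or.inr (hstep _ _ hstep')
      · exact Or.inr (htrans _ _ _ hp (hstep _ _ hstep'))
  have hirr : ∀ x, ¬ P x x := by
    rintro x (h1 | ⟨_, h2⟩) <;> omega
  constructor
  · refine { refl := fun x => Relation.ReflTransGen.refl,
             trans := fun x y z => Relation.ReflTransGen.trans,
             antisymm := ?_ }
    intro x y hxy hyx
    rcases hmain x y hxy with rfl | hp
    · rfl
    rcases hmain y x hyx with rfl | hq
    · rfl
    exact absurd (htrans _ _ _ hp hq) (hirr x)
  · intro x y hne hxy
    rcases hmain x y hxy with rfl | hp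
    · exact absurd rfl hne
    · exact hp
end

section
/- Let K be a proper pre-cubical set. Then the triple Tr(K) = (K[0], S_{Tr(K)}, ≤_{Tr(K)}) is a d-simplicial complex: for every simplex A ∈ S_{Tr(K)}, the restriction of ≤_{Tr(K)} to A is a total order. -/
/-- The vertex `d_f(c)` of a cube `c`, for `f : {1,…,n} → {0,1}`. -/
def PCS.vertexOf (K : PCS) {n : ℕ} (f : Fin n → Bool) (c : K.cube n) : K.cube 0 :=
  cast (congrArg K.cube (by simp [numStars])) (K.dface (fun i => some (f i)) c)

/-- The relation `≤_{Tr(K)}` on vertices: `v ≤ v'` iff `v = d_f(c)`,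
`v' = d_{f'}(c)` for some cube `c` and `f ≤ f'` pointwise. -/
def PCS.leTr (K : PCS) (v v' : K.cube 0) : Prop :=
  ∃ (n : ℕ) (c : K.cube n) (f f' : Fin n → Bool),
    (∀ i, f i ≤ f' i) ∧ K.vertexOf f c = v ∧ K.vertexOf f' c = v'

/-! ### Auxiliary development -/

/-- Apply all faces (last index first). -/
def PCS.ap (K : PCS) : ∀ {m : ℕ}, (Fin m → Bool) → K.cube m → K.cube 0
  | 0, _, x => x
  | m + 1, f, x => K.ap (f ∘ Fin.castSucc) (K.face (f (Fin.last m)) (Fin.last m) x)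

/-- Insert a value at position `i`. -/
def ins {m : ℕ} (i : Fin (m + 1)) (b : Bool) (f : Fin m → Bool) : Fin (m + 1) → Bool :=
  fun j => if h : (j : ℕ) < (i : ℕ) then f ⟨j, by omega⟩
    else if h2 : (j : ℕ) = (i : ℕ) then b else f ⟨(j : ℕ) - 1, by omega⟩

/-- Fill the stars of `g` with `ε`, and pad with `k` values `ε` at the top. -/
def ext (n k : ℕ) (ε : Bool) (g : Fin n → Option Bool) : Fin (n + k) → Bool :=
  fun j => if h : (j : ℕ) < n then (g ⟨j, h⟩).getD ε else ε

lemma ap_congr (K : PCS) {m m' : ℕ} (h : m = m') (f : Fin m → Bool) (f' : Fin m' → Bool)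
    (hf : ∀ (j : ℕ) (h1 : j < m) (h2 : j < m'), f ⟨j, h1⟩ = f' ⟨j, h2⟩)
    (x : K.cube m) (x' : K.cube m') (hx : HEq x x') : K.ap f x = K.ap f' x' := by
  subst h
  obtain rfl : x = x' := eq_of_heq hx
  obtain rfl : f = f' := funext fun j => by simpa [Fin.eta] using hf j j.2 j.2
  rfl

lemma ap_face (K : PCS) : ∀ (m : ℕ) (f : Fin m → Bool) (b : Bool) (i : Fin (m + 1))
    (x : K.cube (m + 1)), K.ap f (K.face b i x) = K.ap (ins i b f) x := by
  intro m
  induction m with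
  | zero =>
    intro f b i x
    obtain rfl : i = Fin.last 0 := Fin.ext (by simp [Fin.val_last])
    show K.face b (Fin.last 0) x = K.face (ins (Fin.last 0) b f (Fin.last 0)) (Fin.last 0) x
    have h : ins (Fin.last 0) b f (Fin.last 0) = b := by simp [ins, Fin.val_last]
    rw [h]
  | succ m ih =>
    intro f b i x
    by_cases hi : (i : ℕ) = m + 1
    · obtain rfl : i = Fin.last (m + 1) := Fin.ext hi
      show K.ap (f ∘ Fin.castSucc) (K.face (f (Fin.last m)) (Fin.last m) (K.face b (Fin.last (m+1)) x))
        = K.ap ((ins (Fin.last (m+1)) b f) ∘ Fin.castSucc)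
          (K.face (ins (Fin.last (m+1)) b f (Fin.last (m+1))) (Fin.last (m+1)) x)
      have h1 : ins (Fin.last (m+1)) b f (Fin.last (m+1)) = b := by simp [ins, Fin.last]
      have h2 : (ins (Fin.last (m+1)) b f) ∘ Fin.castSucc = f := by
        funext j
        have hj : (j : ℕ) < m + 1 := j.2
        simp only [Function.comp, ins, Fin.coe_castSucc, Fin.last]
        rw [dif_pos hj]
      rw [h1, h2]
      rfl
    · have hi' : (i : ℕ) < m + 1 := by omega
      show K.ap (f ∘ Fin.castSucc) (K.face (f (Fin.last m)) (Fin.last m) (K.face b i x))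
        = K.ap ((ins i b f) ∘ Fin.castSucc)
          (K.face (ins i b f (Fin.last (m+1))) (Fin.last (m+1)) x)
      have hcomm : K.face (f (Fin.last m)) (Fin.last m) (K.face b i x)
          = K.face b (⟨(i : ℕ), hi'⟩ : Fin (m+1)) (K.face (f (Fin.last m)) (Fin.last (m+1)) x) :=
        (K.comm b (f (Fin.last m)) ⟨(i : ℕ), hi'⟩ (Fin.last (m+1)) (by simpa using hi') x).symm
      rw [hcomm]
      rw [ih (f ∘ Fin.castSucc) b ⟨(i : ℕ), hi'⟩ (K.face (f (Fin.last m)) (Fin.last (m+1)) x)]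
      have h1 : ins i b f (Fin.last (m+1)) = f (Fin.last m) := by
        simp only [ins, Fin.val_last]
        rw [dif_neg (by omega), dif_neg (by omega)]
        exact congrArg f (Fin.ext (by simp [Fin.val_last]))
      have h2 : (ins i b f) ∘ Fin.castSucc = ins ⟨(i : ℕ), hi'⟩ b (f ∘ Fin.castSucc) := by
        funext j
        simp only [Function.comp, ins, Fin.coe_castSucc]
        by_cases h3 : (j : ℕ) < (i : ℕ)
        · rw [dif_pos h3, dif_pos h3]
          exact congrArg f (Fin.ext rfl)
        · rw [dif_neg h3, dif_neg h3]
          by_cases h4 : (j : ℕ) = (i : ℕ)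
          · rw [dif_pos h4, dif_pos h4]
          · rw [dif_neg h4, dif_neg h4]
            exact congrArg f (Fin.ext rfl)
      rw [h1, h2]

lemma dfaceAux_zero (K : PCS) (k : ℕ) (g : Fin 0 → Option Bool) (c : K.cube (0 + k)) :
    HEq (K.dfaceAux 0 k g c) c := by
  unfold PCS.dfaceAux
  exact cast_heq _ _

lemma dfaceAux_some (K : PCS) {n k : ℕ} (g : Fin (n + 1) → Option Bool) (b : Bool)
    (hg : g (Fin.last n) = some b) (c : K.cube (n + 1 + k)) :
    HEq (K.dfaceAux (n + 1) k g c)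
      (K.dfaceAux n k (g ∘ Fin.castSucc)
        (K.face b ⟨n, by omega⟩ (cast (congrArg K.cube (by omega)) c))) := by
  conv_lhs => unfold PCS.dfaceAux
  split
  · next ε hε =>
      rw [hg] at hε
      obtain rfl : b = ε := by injection hε
      exact cast_heq _ _
  · next hε => rw [hg] at hε; exact absurd hε (by simp)

lemma dfaceAux_none (K : PCS) {n k : ℕ} (g : Fin (n + 1) → Option Bool)
    (hg : g (Fin.last n) = none) (c : K.cube (n + 1 + k)) :
    HEq (K.dfaceAux (n + 1) k g c)
      (K.dfaceAux n (k + 1) (g ∘ Fin.castSucc) (cast (congrArg K.cube (by omega)) c)) := by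
  conv_lhs => unfold PCS.dfaceAux
  split
  · next ε hε => rw [hg] at hε; exact absurd hε (by simp)
  · next hε => exact cast_heq _ _

lemma ap_dfaceAux (K : PCS) (ε : Bool) : ∀ (n k : ℕ) (g : Fin n → Option Bool)
    (c : K.cube (n + k)),
    K.ap (fun _ => ε) (K.dfaceAux n k g c) = K.ap (ext n k ε g) c := by
  intro n
  induction n with
  | zero =>
    intro k g c
    exact ap_congr K (by simp [numStars]) _ _ (fun j h1 h2 => by simp [ext]) _ _
      (dfaceAux_zero K k g c)
  | succ n ih =>
    intro k g c
    rcases hg : g (Fin.last n) with _ | b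
    · -- none case
      have step : K.ap (fun _ => ε) (K.dfaceAux (n + 1) k g c)
          = K.ap (fun _ => ε)
            (K.dfaceAux n (k + 1) (g ∘ Fin.castSucc) (cast (congrArg K.cube (by omega)) c)) :=
        ap_congr K (show numStars g + k = numStars (g ∘ Fin.castSucc) + (k + 1) by
            rw [numStars_castSucc g, hg]; simp; omega) _ _ (fun _ _ _ => rfl) _ _
          (dfaceAux_none K g hg c)
      rw [step, ih (k + 1) (g ∘ Fin.castSucc) (cast (congrArg K.cube (by omega)) c)]
      refine ap_congr K (by omega) _ _ ?_ _ _ (cast_heq _ c)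
      · intro j h1 h2
        simp only [ext, Function.comp]
        by_cases hj : j < n
        · rw [dif_pos hj, dif_pos (show j < n + 1 by omega)]
          exact congrArg (fun t => (g t).getD ε) (Fin.ext rfl)
        · rw [dif_neg hj]
          by_cases hj2 : j < n + 1
          · rw [dif_pos hj2]
            have : (⟨j, hj2⟩ : Fin (n + 1)) = Fin.last n := Fin.ext (by simp [Fin.val_last]; omega)
            rw [this, hg]
            rfl
          · rw [dif_neg hj2]
    · -- some case
      have step : K.ap (fun _ => ε) (K.dfaceAux (n + 1) k g c)
          = K.ap (fun _ => ε)
            (K.dfaceAux n k (g ∘ Fin.castSucc)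
              (K.face b ⟨n, by omega⟩ (cast (congrArg K.cube (by omega)) c))) :=
        ap_congr K (show numStars g + k = numStars (g ∘ Fin.castSucc) + k by
            rw [numStars_castSucc g, hg]; simp) _ _ (fun _ _ _ => rfl) _ _
          (dfaceAux_some K g b hg c)
      rw [step, ih k (g ∘ Fin.castSucc) (K.face b ⟨n, by omega⟩ (cast (congrArg K.cube (by omega)) c)),
        ap_face K (n + k) (ext n k ε (g ∘ Fin.castSucc)) b ⟨n, by omega⟩
          (cast (congrArg K.cube (by omega)) c)]
      refine ap_congr K (by omega) _ _ ?_ _ _ (cast_heq _ c)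
      · intro j h1 h2
        simp only [ext, ins, Function.comp]
        by_cases hj : j < n
        · rw [dif_pos (show j < (⟨n, by omega⟩ : Fin (n + k + 1)) by exact hj),
            dif_pos hj, dif_pos (show j < n + 1 by omega)]
          exact congrArg (fun t => (g t).getD ε) (Fin.ext rfl)
        · by_cases hj2 : j = n
          · rw [dif_neg (show ¬ ((⟨j, h1⟩ : Fin (n + k + 1)) : ℕ) < ((⟨n, by omega⟩ : Fin (n + k + 1)) : ℕ) by simpa using hj),
              dif_pos (show ((⟨j, h1⟩ : Fin (n + k + 1)) : ℕ) = ((⟨n, by omega⟩ : Fin (n + k + 1)) : ℕ) by simpa using hj2),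
              dif_pos (show j < n + 1 by omega)]
            have : (⟨j, by omega⟩ : Fin (n + 1)) = Fin.last n := Fin.ext (by simp [Fin.val_last]; omega)
            rw [this, hg]
            rfl
          · rw [dif_neg (show ¬ ((⟨j, h1⟩ : Fin (n + k + 1)) : ℕ) < ((⟨n, by omega⟩ : Fin (n + k + 1)) : ℕ) by simpa using hj),
              dif_neg (show ¬ ((⟨j, h1⟩ : Fin (n + k + 1)) : ℕ) = ((⟨n, by omega⟩ : Fin (n + k + 1)) : ℕ) by simpa using hj2),
              dif_neg (show ¬ (j - 1 < n) by omega), dif_neg (show ¬ (j < n + 1) by omega)]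

lemma vertexOf_eq_ap (K : PCS) {n : ℕ} (f : Fin n → Bool) (c : K.cube n) :
    K.vertexOf f c = K.ap f c := by
  have hx : HEq (K.vertexOf f c)
      (K.dfaceAux n 0 (fun i => some (f i)) (cast (congrArg K.cube (by omega : n = n + 0)) c)) := by
    unfold PCS.vertexOf PCS.dface
    exact (cast_heq _ _).trans (cast_heq _ _)
  have h1 : K.ap (fun _ : Fin 0 => false) (K.vertexOf f c)
      = K.ap (ext n 0 false (fun i => some (f i)))
          (cast (congrArg K.cube (by omega : n = n + 0)) c) := by
    refine Eq.trans (ap_congr K (show (0:ℕ) = numStars (fun i => some (f i)) + 0 by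
      simp [numStars]) (fun _ => false) (fun _ => false) (fun j h1 h2 => rfl) _ _ hx) ?_
    exact ap_dfaceAux K false n 0 _ _
  refine h1.trans ?_
  refine ap_congr K (show n + 0 = n by omega) _ _ ?_ _ _ (cast_heq _ _)
  intro j hj1 hj2
  simp only [ext]
  rw [dif_pos (show ((⟨j, hj1⟩ : Fin (n + 0)) : ℕ) < n from hj2)]
  rfl

lemma extreme_eq_ap (K : PCS) (ε : Bool) {m : ℕ} (x : K.cube m) :
    K.extreme ε x = K.ap (fun _ => ε) x := by
  have hx : HEq (K.extreme ε x)
      (K.dfaceAux m 0 (fun _ => some ε) (cast (congrArg K.cube (by omega : m = m + 0)) x)) := by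
    unfold PCS.extreme PCS.dface
    exact (cast_heq _ _).trans (cast_heq _ _)
  have h1 : K.ap (fun _ : Fin 0 => ε) (K.extreme ε x)
      = K.ap (ext m 0 ε (fun _ => some ε))
          (cast (congrArg K.cube (by omega : m = m + 0)) x) := by
    refine Eq.trans (ap_congr K (show (0:ℕ) = numStars (fun _ : Fin m => some ε) + 0 by
      simp [numStars]) (fun _ => ε) (fun _ => ε) (fun j h1 h2 => rfl) _ _ hx) ?_
    exact ap_dfaceAux K ε m 0 _ _
  refine h1.trans ?_
  refine ap_congr K (show m + 0 = m by omega) _ _ ?_ _ _ (cast_heq _ _)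
  intro j hj1 hj2
  simp only [ext]
  rw [dif_pos (show ((⟨j, hj1⟩ : Fin (m + 0)) : ℕ) < m from hj2)]
  rfl

lemma le_cube (K : PCS) {v v' : K.cube 0} (h : K.leTr v v') :
    ∃ (m : ℕ) (b : K.cube m), K.extreme false b = v ∧ K.extreme true b = v' := by
  obtain ⟨n, c, f, f', hff, hv, hv'⟩ := h
  have key : ∀ (ε : Bool) (f0 : Fin n → Bool), (∀ i, (if f i = f' i then some (f i)
        else none : Option Bool).getD ε = f0 i) →
      K.extreme ε (K.dface (fun i => if f i = f' i then some (f i) else none) c)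
        = K.vertexOf f0 c := by
    intro ε f0 hf0
    rw [extreme_eq_ap, vertexOf_eq_ap]
    have hx : HEq (K.dface (fun i => if f i = f' i then some (f i) else none) c)
        (K.dfaceAux n 0 (fun i => if f i = f' i then some (f i) else none)
          (cast (congrArg K.cube (by omega : n = n + 0)) c)) := by
      unfold PCS.dface
      exact cast_heq _ _
    refine Eq.trans (ap_congr K (show numStars (fun i => if f i = f' i then some (f i) else none)
      = numStars (fun i => if f i = f' i then some (f i) else none) + 0 by omega) (fun _ => ε) (fun _ => ε) (fun _ _ _ => rfl) _ _ hx) ?_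
    refine Eq.trans (ap_dfaceAux K ε n 0 _ _) ?_
    refine ap_congr K (show n + 0 = n by omega) _ _ ?_ _ _ (cast_heq _ _)
    intro j h1 h2
    simp only [ext]
    rw [dif_pos (show ((⟨j, h1⟩ : Fin (n + 0)) : ℕ) < n from h2)]
    exact hf0 ⟨j, h2⟩
  refine ⟨_, K.dface (fun i => if f i = f' i then some (f i) else none) c, ?_, ?_⟩
  · rw [← hv]
    refine key false f ?_
    intro i
    by_cases hfi : f i = f' i
    · rw [if_pos hfi]; rfl
    · rw [if_neg hfi]
      have := hff i
      revert this hfi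
      cases f i <;> cases f' i <;> simp
  · rw [← hv']
    refine key true f' ?_
    intro i
    by_cases hfi : f i = f' i
    · rw [if_pos hfi, hfi]; rfl
    · rw [if_neg hfi]
      have := hff i
      revert this hfi
      cases f i <;> cases f' i <;> simp

lemma leTr_antisymm (K : PCS) (hK : K.Proper) {v v' : K.cube 0}
    (h1 : K.leTr v v') (h2 : K.leTr v' v) : v = v' := by
  obtain ⟨m, b, hb0, hb1⟩ := le_cube K h1
  obtain ⟨m', b', hb0', hb1'⟩ := le_cube K h2
  have hpair : ({K.extreme false b, K.extreme true b} : Set (K.cube 0))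
      = ({K.extreme false b', K.extreme true b'} : Set (K.cube 0)) := by
    rw [hb0, hb1, hb0', hb1']
    exact Set.pair_comm v v'
  have := hK (a₁ := ⟨m, b⟩) (a₂ := ⟨m', b'⟩) hpair
  obtain ⟨rfl, hb⟩ := Sigma.mk.inj_iff.mp this
  obtain rfl : b = b' := eq_of_heq hb
  rw [← hb0, ← hb0']

/-- In a proper pre-cubical set, the restriction of
`≤_{Tr(K)}` to any simplex `A = {d_{f₀}(c),…,d_{f_k}(c)}` (with `f₀ < ⋯ < f_k`)
of the triangulation is a total (linear) order. -/
theorem stmt8 (K : PCS) (hK : K.Proper) {n : ℕ} (c : K.cube n) (k : ℕ)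
    (F : Fin (k + 1) → Fin n → Bool) (hF : StrictMono F) :
    IsLinearOrder {x : K.cube 0 // x ∈ Set.range fun i => K.vertexOf (F i) c}
      (fun a b => K.leTr a.1 b.1) := by
  have hmono : ∀ i j : Fin (k + 1), i ≤ j →
      K.leTr (K.vertexOf (F i) c) (K.vertexOf (F j) c) := by
    intro i j hij
    refine ⟨n, c, F i, F j, ?_, rfl, rfl⟩
    intro t
    rcases eq_or_lt_of_le hij with rfl | hlt
    · exact le_refl _
    · exact (hF hlt).le t
  refine { refl := ?_, trans := ?_, antisymm := ?_, total := ?_ }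
  · intro a
    obtain ⟨i, hi⟩ := a.2
    show K.leTr a.1 a.1
    rw [← hi]
    exact hmono i i le_rfl
  · intro a b d hab hbd
    obtain ⟨i, hi⟩ := a.2
    obtain ⟨j, hj⟩ := b.2
    obtain ⟨l, hl⟩ := d.2
    show K.leTr a.1 d.1
    rcases le_or_gt i l with h | h
    · rw [← hi, ← hl]
      exact hmono i l h
    · rcases le_or_gt l j with h2 | h2
      · have hdb : K.leTr d.1 b.1 := by rw [← hl, ← hj]; exact hmono l j h2
        have hbd' : b.1 = d.1 := leTr_antisymm K hK hbd hdb
        rw [← hbd']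
        exact hab
      · have hba : K.leTr b.1 a.1 := by
          rw [← hj, ← hi]
          exact hmono j i (le_of_lt (h2.trans h))
        have hab' : a.1 = b.1 := leTr_antisymm K hK hab hba
        rw [hab']
        exact hbd
  · intro a b hab hba
    exact Subtype.ext (leTr_antisymm K hK hab hba)
  · intro a b
    obtain ⟨i, hi⟩ := a.2
    obtain ⟨j, hj⟩ := b.2
    rcases le_total i j with h | h
    · left
      show K.leTr a.1 b.1
      rw [← hi, ← hj]
      exact hmono i j h
    · right
      show K.leTr b.1 a.1
      rw [← hi, ← hj]
      exact hmono j i h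
end

section
/- Let O_n be the poset of surjections f:{1,…,n}→{1,…,k(f)} with f ⪯ g iff g = h∘f for some non-decreasing h. For 𝐧=(n₁,…,n_l)∈Seq(n), the subposet O_𝐧 = {f : f ⪯ f_𝐧} is isomorphic to the product poset O_{n₁}×⋯×O_{n_l}. -/
/-!
An element `a` of `O n` is determined by the total preorder `a i ≤ a j` it induces on `Fin n`,
`a ⪯ b` is inclusion of these preorders, and every function from `Fin n` to a linear order
induces an element of `O n` by ranking its values. Below `f_𝐧`, a preorder must put `i` before
`j` whenever `f_𝐧 i < f_𝐧 j` (by totality), so it is the lexicographic gluing of arbitrary total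
preorders on the fibres of `f_𝐧`. Restricting to the fibres and gluing back are therefore
mutually inverse, and both preserve and reflect `⪯`.
-/

/-- The poset `O_n` of surjections `f : {1,…,n} → {1,…,k}` (here
`Fin n → Fin (k+1)`, so the codomain is nonempty). -/
def O (n : ℕ) := Σ k : ℕ, {f : Fin n → Fin (k + 1) // Function.Surjective f}

/-- The order on `O_n`: `f ⪯ g` iff `g = h ∘ f` for a non-decreasing `h`. -/
def Ole {n : ℕ} (a b : O n) : Prop :=
  ∃ h : Fin (a.1 + 1) → Fin (b.1 + 1), Monotone h ∧ b.2.1 = h ∘ a.2.1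

open Finset

theorem exists_sigma_fin_equiv_of_card_fiber {α ι : Type*} [Fintype α] [DecidableEq ι]
    {f : α → ι} {dims : ι → ℕ} (hfib : ∀ k, #{i | f i = k} = dims k) :
    ∃ ε : (Σ k, Fin (dims k)) ≃ α, ∀ p, f (ε p) = p.1 :=
  let σ k : {i // f i = k} ≃ Fin (dims k) :=
    Fintype.equivFinOfCardEq ((Fintype.card_subtype _).trans (hfib k))
  ⟨(Equiv.sigmaCongrRight fun k => (σ k).symm).trans (Equiv.sigmaFiberEquiv f),
    fun p => ((σ p.1).symm p.2).2⟩

namespace O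

variable {n : ℕ}

def rel (a : O n) (i j : Fin n) : Prop := a.2.1 i ≤ a.2.1 j

theorem rel_total (a : O n) (i j : Fin n) : a.rel i j ∨ a.rel j i := le_total _ _

theorem ole_refl (a : O n) : Ole a a := ⟨id, monotone_id, rfl⟩

theorem ole_antisymm {a b : O n} (hab : Ole a b) (hba : Ole b a) : a = b := by
  obtain ⟨k, f, hf⟩ := a
  obtain ⟨k', g, hg⟩ := b
  obtain ⟨h, hmono, hg_eq⟩ := hab
  obtain ⟨h', hmono', hf_eq⟩ := hba
  dsimp only at h h' hg_eq hf_eq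
  have left : h' ∘ h = id :=
    hf.injective_comp_right (show (h' ∘ h) ∘ f = id ∘ f by
      rw [Function.comp_assoc, ← hg_eq, ← hf_eq]; rfl)
  have right : h ∘ h' = id :=
    hg.injective_comp_right (show (h ∘ h') ∘ g = id ∘ g by
      rw [Function.comp_assoc, ← hf_eq, ← hg_eq]; rfl)
  let e : Fin (k + 1) ≃o Fin (k' + 1) :=
    Equiv.toOrderIso ⟨h, h', congrFun left, congrFun right⟩ hmono hmono'
  obtain rfl : k = k' := Nat.succ_injective (Fin.equiv_iff_eq.mp ⟨e.toEquiv⟩)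
  have hid : h = id := congrArg DFunLike.coe (Subsingleton.elim e (OrderIso.refl _))
  obtain rfl : g = f := by rw [hg_eq, hid]; rfl
  rfl

theorem ole_iff_forall_rel {a b : O n} : Ole a b ↔ ∀ i j, a.rel i j → b.rel i j := by
  constructor
  · rintro ⟨h, hmono, hfac⟩ i j hij
    simp only [rel, hfac, Function.comp_apply]
    exact hmono hij
  · intro hrel
    let s := Function.surjInv a.2.2
    have hs : ∀ i, a.2.1 (s (a.2.1 i)) = a.2.1 i := fun i => Function.surjInv_eq a.2.2 _
    refine ⟨b.2.1 ∘ s, fun x y hxy => ?_, funext fun i => ?_⟩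
    · refine hrel _ _ ?_
      rw [rel, Function.surjInv_eq a.2.2, Function.surjInv_eq a.2.2]
      exact hxy
    · exact le_antisymm (hrel _ _ (hs i).ge) (hrel _ _ (hs i).le)

theorem rel_injective : Function.Injective (rel : O n → Fin n → Fin n → Prop) := fun a b h =>
  ole_antisymm (ole_iff_forall_rel.2 fun i j => by rw [h]; exact id)
    (ole_iff_forall_rel.2 fun i j => by rw [h]; exact id)

theorem rel_of_ole_of_lt {a c : O n} (hac : Ole a c) {i j : Fin n} (hlt : c.2.1 i < c.2.1 j) :
    a.rel i j := by
  by_contra hij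
  exact (ole_iff_forall_rel.1 hac j i ((a.rel_total i j).resolve_left hij)).not_gt hlt

theorem ole_iff_of_ole {a b c : O n} (hac : Ole a c) (hbc : Ole b c) :
    Ole a b ↔ ∀ i j, c.2.1 i = c.2.1 j → a.rel i j → b.rel i j := by
  refine ⟨fun hab i j _ => ole_iff_forall_rel.1 hab i j, fun h => ?_⟩
  refine ole_iff_forall_rel.2 fun i j hij => ?_
  rcases (ole_iff_forall_rel.1 hac i j hij).lt_or_eq with hlt | heq
  · exact rel_of_ole_of_lt hbc hlt
  · exact h i j heq hij

noncomputable def ofFun {β : Type*} [LinearOrder β] (g : Fin n → β) (hn : 0 < n) : O n :=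
  have hcard : #(univ.image g) = #(univ.image g) - 1 + 1 :=
    (Nat.sub_add_cancel ((univ_nonempty_iff.2 ⟨⟨0, hn⟩⟩).image g).card_pos).symm
  ⟨_, fun i => ((univ.image g).orderIsoOfFin hcard).symm ⟨g i, mem_image_of_mem g (mem_univ i)⟩,
    fun x => by
      obtain ⟨⟨y, hy⟩, rfl⟩ := ((univ.image g).orderIsoOfFin hcard).symm.surjective x
      obtain ⟨i, -, rfl⟩ := mem_image.1 hy
      exact ⟨i, rfl⟩⟩

theorem rel_ofFun {β : Type*} [LinearOrder β] (g : Fin n → β) (hn : 0 < n) (i j : Fin n) :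
    (ofFun g hn).rel i j ↔ g i ≤ g j :=
  (OrderIso.le_iff_le _).trans Subtype.mk_le_mk

section Blocks

variable {n l : ℕ} {dims : Fin (l + 1) → ℕ} (ε : (Σ t, Fin (dims t)) ≃ Fin n)

noncomputable def restrict (hd : ∀ t, 0 < dims t) (a : O n) (t : Fin (l + 1)) : O (dims t) :=
  ofFun (fun x => a.2.1 (ε ⟨t, x⟩)) (hd t)

noncomputable def glue (G : ∀ t, O (dims t)) (hn : 0 < n) : O n :=
  ofFun (fun i => toLex (⟨(ε.symm i).1, (G _).2.1 (ε.symm i).2⟩ : Σ t, Fin ((G t).1 + 1))) hn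

theorem rel_restrict (hd : ∀ t, 0 < dims t) (a : O n) (t : Fin (l + 1)) (x y : Fin (dims t)) :
    (restrict ε hd a t).rel x y ↔ a.rel (ε ⟨t, x⟩) (ε ⟨t, y⟩) :=
  rel_ofFun _ _ x y

theorem rel_glue (G : ∀ t, O (dims t)) (hn : 0 < n) (t : Fin (l + 1)) (x y : Fin (dims t)) :
    (glue ε G hn).rel (ε ⟨t, x⟩) (ε ⟨t, y⟩) ↔ (G t).rel x y := by
  rw [glue, rel_ofFun, Equiv.symm_apply_apply, Equiv.symm_apply_apply, Sigma.Lex.le_def]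
  exact (or_iff_right (lt_irrefl t)).trans ⟨fun ⟨_, h⟩ => h, fun h => ⟨rfl, h⟩⟩

theorem restrict_glue (hd : ∀ t, 0 < dims t) (G : ∀ t, O (dims t)) (hn : 0 < n) :
    restrict ε hd (glue ε G hn) = G :=
  funext fun t => rel_injective <| funext fun x => funext fun y => propext <| by
    rw [rel_restrict, rel_glue]

variable {fN : Fin n → Fin (l + 1)}

theorem forall_fiber_iff (hε : ∀ p, fN (ε p) = p.1) {P : Fin n → Fin n → Prop} :
    (∀ i j, fN i = fN j → P i j) ↔ ∀ t x y, P (ε ⟨t, x⟩) (ε ⟨t, y⟩) := by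
  refine ⟨fun h t x y => h _ _ (by rw [hε, hε]), fun h i j hij => ?_⟩
  obtain ⟨⟨t, x⟩, rfl⟩ := ε.surjective i
  obtain ⟨⟨s, y⟩, rfl⟩ := ε.surjective j
  obtain rfl : t = s := by simpa only [hε] using hij
  exact h t x y

theorem glue_ole (hε : ∀ p, fN (ε p) = p.1) (hsurj : Function.Surjective fN)
    (G : ∀ t, O (dims t)) (hn : 0 < n) : Ole (glue ε G hn) ⟨l, fN, hsurj⟩ := by
  refine ole_iff_forall_rel.2 fun i j hij => ?_
  rw [glue, rel_ofFun] at hij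
  change fN i ≤ fN j
  rw [← ε.apply_symm_apply i, ← ε.apply_symm_apply j, hε, hε]
  rcases Sigma.Lex.le_def.1 hij with hlt | ⟨heq, -⟩
  · exact hlt.le
  · exact heq.le

theorem ole_iff_forall_restrict (hε : ∀ p, fN (ε p) = p.1) (hsurj : Function.Surjective fN)
    (hd : ∀ t, 0 < dims t) {a b : O n} (ha : Ole a ⟨l, fN, hsurj⟩) (hb : Ole b ⟨l, fN, hsurj⟩) :
    Ole a b ↔ ∀ t, Ole (restrict ε hd a t) (restrict ε hd b t) := by
  refine (ole_iff_of_ole ha hb).trans ((forall_fiber_iff ε hε).trans ?_)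
  simp only [ole_iff_forall_rel, rel_restrict]

theorem glue_restrict (hε : ∀ p, fN (ε p) = p.1) (hsurj : Function.Surjective fN)
    (hd : ∀ t, 0 < dims t) (hn : 0 < n) {a : O n} (ha : Ole a ⟨l, fN, hsurj⟩) :
    glue ε (restrict ε hd a) hn = a := by
  have hg := glue_ole ε hε hsurj (restrict ε hd a) hn
  have hrestrict := restrict_glue ε hd (restrict ε hd a) hn
  exact ole_antisymm
    ((ole_iff_forall_restrict ε hε hsurj hd hg ha).2 fun t => by rw [hrestrict]; exact ole_refl _)
    ((ole_iff_forall_restrict ε hε hsurj hd ha hg).2 fun t => by rw [hrestrict]; exact ole_refl _)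

end Blocks

end O

theorem stmt12_general (n l : ℕ) (dims : Fin (l + 1) → ℕ) (hd : ∀ k, 0 < dims k)
    (fN : Fin n → Fin (l + 1)) (hsurj : Function.Surjective fN)
    (hfib : ∀ k, (Finset.univ.filter fun i => fN i = k).card = dims k) :
    ∃ e : {f : O n // Ole f ⟨l, fN, hsurj⟩} ≃ (∀ k : Fin (l + 1), O (dims k)),
      ∀ a b : {f : O n // Ole f ⟨l, fN, hsurj⟩},
        Ole a.1 b.1 ↔ ∀ k, Ole (e a k) (e b k) := by
  obtain ⟨ε, hε⟩ := exists_sigma_fin_equiv_of_card_fiber hfib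
  have hn : 0 < n := (ε ⟨0, 0, hd 0⟩).pos
  exact ⟨{ toFun := fun a => O.restrict ε hd a.1
           invFun := fun G => ⟨O.glue ε G hn, O.glue_ole ε hε hsurj G hn⟩
           left_inv := fun a => Subtype.ext (O.glue_restrict ε hε hsurj hd hn a.2)
           right_inv := fun G => O.restrict_glue ε hd G hn },
    fun a b => O.ole_iff_forall_restrict ε hε hsurj hd a.2 b.2⟩

/-- For `𝐧 = (n₁,…,n_l)` a sequence of positive integers
summing to `n`, with `f_𝐧` the monotone surjection with fibre sizes `nₖ`,
the subposet `O_𝐧 = {f ∈ O_n : f ⪯ f_𝐧}` is isomorphic to the product poset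
`O_{n₁} × ⋯ × O_{n_l}`. -/
theorem stmt12 (n l : ℕ) (dims : Fin (l + 1) → ℕ) (hd : ∀ k, 0 < dims k)
    (fN : Fin n → Fin (l + 1)) (hmono : Monotone fN) (hsurj : Function.Surjective fN)
    (hfib : ∀ k, (Finset.univ.filter fun i => fN i = k).card = dims k) :
    ∃ e : {f : O n // Ole f ⟨l, fN, hsurj⟩} ≃ (∀ k : Fin (l + 1), O (dims k)),
      ∀ a b : {f : O n // Ole f ⟨l, fN, hsurj⟩},
        Ole a.1 b.1 ↔ ∀ k, Ole (e a k) (e b k) :=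
  stmt12_general n l dims hd fN hsurj hfib
end

section
/- For σ,φ permutations of {1,…,n} and τ,ψ∈T⁰_n, one has f^τ∘σ ⪯ f^ψ∘φ in O_n if and only if f^τ ⪯ f^ψ and σφ⁻¹ ∈ Σ_ψ, where Σ_ψ = {π : f^ψ∘π = f^ψ}. -/
/-- `f^τ ∈ O_n` for `τ ∈ T⁰_n`: `f^τ(i) = 1 + Σ_{j<i} τ(j)` (0-indexed here). -/
def fT {m : ℕ} (τ : Fin m → Bool) (i : Fin (m + 1)) :
    Fin ((∑ j, if τ j then 1 else 0) + 1) :=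
  ⟨∑ j ∈ Finset.univ.filter (fun j : Fin m => (j : ℕ) < (i : ℕ)), (if τ j then 1 else 0), by
    have h := Finset.sum_le_sum_of_subset
      (f := fun j : Fin m => if τ j then 1 else 0)
      (Finset.filter_subset (fun j : Fin m => (j : ℕ) < (i : ℕ)) Finset.univ)
    exact Nat.lt_succ_of_le (by simpa using h)⟩

/-! Composing with `φ⁻¹` turns `f^ψ ∘ φ = h ∘ f^τ ∘ σ` into `f^ψ = (h ∘ f^τ) ∘ σφ⁻¹`. Both `f^ψ`
and `h ∘ f^τ` are monotone, and a monotone tuple that stays monotone after a permutation is fixed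
by it; hence `σφ⁻¹` fixes `h ∘ f^τ`, which is therefore `f^ψ`. -/

open Equiv

theorem fT_monotone {m : ℕ} (τ : Fin m → Bool) : Monotone (fT τ) := fun _ _ hii => by
  simp only [fT, Fin.mk_le_mk]
  exact Finset.sum_le_sum_of_subset
    (Finset.monotone_filter_right _ fun _ _ hj => hj.trans_le hii)

section PermutedTuples

variable {n : ℕ} {α β : Type*}

theorem Monotone.comp_perm_eq_self [PartialOrder α] {f : Fin n → α} {π : Perm (Fin n)}
    (hf : Monotone f) (hfπ : Monotone (f ∘ π)) : f ∘ π = f :=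
  Tuple.unique_monotone (τ := 1) hfπ hf

theorem comp_perm_eq_comp_perm_iff {g k : Fin n → α} {σ φ : Perm (Fin n)} :
    g ∘ φ = k ∘ σ ↔ g = k ∘ ⇑(σ * φ⁻¹) := by
  rw [Perm.coe_mul, Perm.coe_inv, ← Function.comp_assoc, Equiv.eq_comp_symm, eq_comm]

theorem exists_monotone_comp_perm_iff [Preorder α] [PartialOrder β] {f : Fin n → α}
    {g : Fin n → β} (hf : Monotone f) (hg : Monotone g) (σ φ : Perm (Fin n)) :
    (∃ h : α → β, Monotone h ∧ g ∘ φ = h ∘ (f ∘ σ)) ↔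
      (∃ h : α → β, Monotone h ∧ g = h ∘ f) ∧ g ∘ ⇑(σ * φ⁻¹) = g := by
  constructor
  · rintro ⟨h, hh, hgφ⟩
    rw [← Function.comp_assoc, comp_perm_eq_comp_perm_iff] at hgφ
    have hhf : (h ∘ f) ∘ ⇑(σ * φ⁻¹) = h ∘ f :=
      (hh.comp hf).comp_perm_eq_self (hgφ ▸ hg)
    exact ⟨⟨h, hh, hgφ.trans hhf⟩, by rw [hgφ, hhf, hhf]⟩
  · rintro ⟨⟨h, hh, rfl⟩, hσφ⟩
    exact ⟨h, hh, by rw [← Function.comp_assoc, comp_perm_eq_comp_perm_iff, hσφ]⟩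

end PermutedTuples

/-- For permutations `σ, φ` of `{1,…,n}` and `τ, ψ ∈ T⁰_n`:
`f^τ∘σ ⪯ f^ψ∘φ` iff `f^τ ⪯ f^ψ` and `σφ⁻¹ ∈ Σ_ψ = {π : f^ψ∘π = f^ψ}`. -/
theorem stmt14 {m : ℕ} (τ ψ : Fin m → Bool) (σ φ : Equiv.Perm (Fin (m + 1))) :
    (∃ h : Fin ((∑ j, if τ j then 1 else 0) + 1) → Fin ((∑ j, if ψ j then 1 else 0) + 1),
      Monotone h ∧ (fT ψ) ∘ φ = h ∘ ((fT τ) ∘ σ)) ↔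
    ((∃ h : Fin ((∑ j, if τ j then 1 else 0) + 1) → Fin ((∑ j, if ψ j then 1 else 0) + 1),
        Monotone h ∧ fT ψ = h ∘ fT τ) ∧
      (fT ψ) ∘ (σ * φ⁻¹) = fT ψ) :=
  exists_monotone_comp_perm_iff (fT_monotone τ) (fT_monotone ψ) σ φ
end

section
/- For each τ∈T^{n−l}_𝐧 there is a unique pair (k,r) with k∈{1,…,l}, r∈{1,…,n_k−1} such that τ(b_{k−1}+r)=n−l, and the map τ ↦ s_{n−l}∘τ is a bijection from T^{n−l}_𝐧 onto the disjoint union over k,r of T^{n−l−1}_{𝐧[k,r]}. Moreover sgn_{𝐧[k,r]}(s_{n−l}τ) = (−1)^{n−l−b_{k−1}−r+k−1}·sgn_𝐧(τ). -/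
/-- Partial sums `b_k = n₁ + ⋯ + n_k` of a sequence of block sizes. -/
def bs {L : ℕ} (dims : Fin L → ℕ) (k : ℕ) : ℕ :=
  ∑ j ∈ Finset.univ.filter (fun j : Fin L => (j : ℕ) < k), dims j

/-- `τ ∈ T^d_𝐧` (1-indexed positions `p = (i:ℕ)+1`): values in `{0,…,d+1}`,
every value in `{1,…,d}` is attained, and the value at each interior cut point
`b_j` (`1 ≤ j ≤ L−1`) of the partition `dims` is `d+1`. -/
def TD {m L : ℕ} (dims : Fin L → ℕ) (d : ℕ) (τ : Fin m → ℕ) : Prop :=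
  (∀ i, τ i ≤ d + 1) ∧
  (∀ j : ℕ, 1 ≤ j → j ≤ d → ∃ i, τ i = j) ∧
  (∀ (i : Fin m) (j : ℕ), 1 ≤ j → j + 1 ≤ L → (i : ℕ) + 1 = bs dims j → τ i = d + 1)

/-- The data computing `sgn_𝐧(τ)`: `ϱ` is the increasing bijection from
`{1,…,d}` onto the non-cut positions, and `π = τ ∘ ϱ` viewed as a permutation
of `{1,…,d}` (0-indexed: `τ(ϱ(j)) = π(j)+1`). Then `sgn_𝐧(τ) = sgn(π)`. -/
def SgnData {m L d : ℕ} (dims : Fin L → ℕ) (τ : Fin m → ℕ)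
    (ϱ : Fin d → Fin m) (π : Equiv.Perm (Fin d)) : Prop :=
  StrictMono ϱ ∧
  (∀ i : Fin m, i ∈ Set.range ϱ ↔ ∀ j : ℕ, 1 ≤ j → j + 1 ≤ L → (i : ℕ) + 1 ≠ bs dims j) ∧
  (∀ j, τ (ϱ j) = (π j : ℕ) + 1)

/-- The refined partition `𝐧[k,r]`. -/
def refine {l : ℕ} (dims : Fin (l + 1) → ℕ) (k : Fin (l + 1)) (r : ℕ) :
    Fin (l + 2) → ℕ :=
  Fin.insertNth k.succ (dims k - r) (Function.update dims k r)

/-!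
On the positions that are not cut points of `𝐧`, any `τ ∈ T^d_𝐧` is a bijection onto
`{1, …, d}`: there are exactly `d` such positions, cut points carry the value `d + 1`, and every
value `1, …, d` is attained. So the top value `d` sits at a single non-cut position
`b_{k-1} + r`, and `s_d ∘ τ` is `τ` with that position turned into the new cut point of `𝐧[k,r]`;
conversely, raising the old cut points back to `d + 1` recovers `τ`. For the sign, removing the top
value from the permutation `τ ∘ ϱ` costs `(-1)^(d - j₀)`, where `j₀ + (k - 1) = b_{k-1} + r - 1`
counts the non-cut and the cut positions before the new cut.
-/

open Finset

section bs
variable {L : ℕ} {dims : Fin L → ℕ}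

@[simp] lemma bs_zero : bs dims 0 = 0 := by simp [bs]

lemma bs_succ (k : Fin L) : bs dims (k + 1) = bs dims k + dims k := by
  have : ({j | (j : ℕ) < k + 1} : Finset (Fin L)) =
      insert k ({j | (j : ℕ) < k} : Finset (Fin L)) := by
    ext j
    simp only [mem_filter, mem_insert, mem_univ, true_and, Fin.ext_iff]
    omega
  rw [bs, this, sum_insert (by simp), bs, add_comm]

lemma bs_mono : Monotone (bs dims) := fun _ _ hab =>
  sum_le_sum_of_subset fun j => by simp only [mem_filter, mem_univ, true_and]; omega

lemma bs_of_le {k : ℕ} (hk : L ≤ k) : bs dims k = ∑ j, dims j := by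
  rw [bs, filter_true_of_mem fun j _ => j.isLt.trans_le hk]

lemma bs_strictMonoOn (hd : ∀ j, 0 < dims j) : StrictMonoOn (bs dims) (Set.Iic L) :=
  fun a _ b hb hab => calc
    bs dims a < bs dims (a + 1) := by
      rw [bs_succ ⟨a, by have := Set.mem_Iic.1 hb; omega⟩]; exact Nat.lt_add_of_pos_right (hd _)
    _ ≤ bs dims b := bs_mono hab

lemma bs_pos (hd : ∀ j, 0 < dims j) {j : ℕ} (hj : 0 < j) (hjL : j ≤ L) : 0 < bs dims j := by
  simpa using bs_strictMonoOn hd (by simp) (Set.mem_Iic.2 hjL) hj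

end bs

def IsCut {L : ℕ} (dims : Fin L → ℕ) (p : ℕ) : Prop :=
  ∃ j, 1 ≤ j ∧ j + 1 ≤ L ∧ p = bs dims j

lemma not_isCut_iff {L : ℕ} {dims : Fin L → ℕ} {p : ℕ} :
    ¬IsCut dims p ↔ ∀ j, 1 ≤ j → j + 1 ≤ L → p ≠ bs dims j := by
  simp [IsCut]

section IsCut
variable {L : ℕ} {dims : Fin (L + 1) → ℕ}

lemma bs_add_lt_bs_succ {k : Fin (L + 1)} {r : ℕ} (hrk : r < dims k) :
    bs dims k + r < bs dims (k + 1) := by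
  rw [bs_succ]; omega

lemma bs_add_lt_sum {k : Fin (L + 1)} {r : ℕ} (hrk : r < dims k) :
    bs dims k + r < ∑ j, dims j :=
  (bs_add_lt_bs_succ hrk).trans_le <| (bs_mono (by omega : (k : ℕ) + 1 ≤ L + 1)).trans_eq
    (bs_of_le le_rfl)

lemma exists_val_add_one_eq_bs_add {m : ℕ} (hsum : ∑ j, dims j = m + 1) {k : Fin (L + 1)}
    {r : ℕ} (hr : 0 < r) (hrk : r < dims k) : ∃ i : Fin m, (i : ℕ) + 1 = bs dims k + r :=
  ⟨⟨bs dims k + r - 1, by have := bs_add_lt_sum hrk; omega⟩, by simp only; omega⟩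

lemma not_isCut_bs_add {k : Fin (L + 1)} {r : ℕ} (hr : 0 < r) (hrk : r < dims k) :
    ¬IsCut dims (bs dims k + r) := by
  rintro ⟨j, -, -, hj⟩
  rcases le_or_gt j k with h | h
  · have := bs_mono (dims := dims) h; omega
  · have := bs_mono (dims := dims) (show (k : ℕ) + 1 ≤ j by omega)
    have := bs_add_lt_bs_succ hrk; omega

lemma bs_add_inj {k k' : Fin (L + 1)} {r r' : ℕ} (hr : 0 < r) (hrk : r < dims k)
    (hr' : 0 < r') (hrk' : r' < dims k') (h : bs dims k + r = bs dims k' + r') :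
    k = k' ∧ r = r' := by
  have key : ∀ {a a' : Fin (L + 1)} {s s' : ℕ}, s < dims a → 0 < s' →
      bs dims a + s = bs dims a' + s' → ¬(a : ℕ) < a' := by
    intro a a' s s' hs hs' heq hlt
    have := bs_mono (dims := dims) (show (a : ℕ) + 1 ≤ a' by omega)
    have := bs_add_lt_bs_succ hs; omega
  obtain rfl : k = k' := Fin.ext (by have := key hrk hr' h; have := key hrk' hr h.symm; omega)
  exact ⟨rfl, by omega⟩

lemma exists_eq_bs_add_of_not_isCut {p : ℕ} (hp : 0 < p) (hpL : p < bs dims (L + 1))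
    (hc : ¬IsCut dims p) : ∃ k : Fin (L + 1), ∃ r, 0 < r ∧ r < dims k ∧ p = bs dims k + r := by
  set K := Nat.findGreatest (fun j => bs dims j < p) L
  have hKL : K ≤ L := Nat.findGreatest_le L
  have hK : bs dims K < p := Nat.findGreatest_spec (P := fun j => bs dims j < p) (Nat.zero_le L)
    (by simpa only [bs_zero] using hp)
  have hK1 : p < bs dims (K + 1) := by
    rcases hKL.eq_or_lt with h | h
    · rwa [h]
    · have : ¬bs dims (K + 1) < p :=
        Nat.findGreatest_is_greatest (P := fun j => bs dims j < p) (Nat.lt_succ_self K) (by omega)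
      have := not_isCut_iff.1 hc (K + 1) (by omega) (by omega)
      omega
  have hstep : bs dims (K + 1) = bs dims K + dims ⟨K, by omega⟩ :=
    bs_succ (⟨K, by omega⟩ : Fin (L + 1))
  exact ⟨⟨K, by omega⟩, p - bs dims K, by omega, by omega, by simp only; omega⟩

open Classical in
lemma card_isCut_lt {m : ℕ} (hd : ∀ j, 0 < dims j) (hsum : ∑ j, dims j = m + 1)
    {k : Fin (L + 1)} {r : ℕ} (hr : 0 < r) (hrk : r ≤ dims k) :
    #{i : Fin m | IsCut dims (i + 1) ∧ (i : ℕ) + 1 < bs dims k + r} = k := by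
  have hmono := bs_strictMonoOn hd
  have hlast : bs dims (L + 1) = m + 1 := (bs_of_le le_rfl).trans hsum
  have hk1 : bs dims k + r ≤ bs dims (k + 1) := by rw [bs_succ]; omega
  have hcut_lt (j : ℕ) (hj : j ≤ L) : bs dims j < m + 1 :=
    hlast ▸ hmono (Set.mem_Iic.2 (by omega)) (Set.mem_Iic.2 le_rfl) (Nat.lt_succ_of_le hj)
  have hcut_pos (j : ℕ) (hj : j ≤ L) : 0 < bs dims (j + 1) := bs_pos hd (by omega) (by omega)
  refine ((card_range (k : ℕ)).symm.trans ?_).symm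
  refine card_bij (fun j hj => ⟨bs dims (j + 1) - 1, ?_⟩) (fun j hj => ?_)
    (fun a ha b hb hab => ?_) (fun i hi => ?_)
  · simp only [mem_range] at hj
    have := hcut_lt (j + 1) (by omega)
    have := hcut_pos j (by omega)
    omega
  · simp only [mem_range] at hj
    have := hcut_pos j (by omega)
    have := bs_mono (dims := dims) (show j + 1 ≤ k by omega)
    simp only [mem_filter, mem_univ, true_and]
    exact ⟨⟨j + 1, by omega, by omega, by omega⟩, by omega⟩
  · simp only [mem_range, Fin.mk.injEq] at ha hb hab
    have := hcut_pos a (by omega)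
    have := hcut_pos b (by omega)
    have := hmono.injOn (Set.mem_Iic.2 (show a + 1 ≤ L + 1 by omega))
      (Set.mem_Iic.2 (show b + 1 ≤ L + 1 by omega))
      (show bs dims (a + 1) = bs dims (b + 1) by omega)
    omega
  · simp only [mem_filter, mem_univ, true_and] at hi
    obtain ⟨⟨j, hj1, hjL, hij⟩, hlt⟩ := hi
    have hjk : j ≤ k := by
      by_contra h
      have := bs_mono (dims := dims) (show (k : ℕ) + 1 ≤ j by omega)
      omega
    refine ⟨j - 1, mem_range.2 (by omega), Fin.ext ?_⟩
    simp only [Nat.sub_add_cancel hj1]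
    omega

end IsCut

section refine
variable {l : ℕ} {dims : Fin (l + 1) → ℕ} {k : Fin (l + 1)} {r : ℕ}

lemma refine_castSucc_of_lt {i : Fin (l + 1)} (h : i < k) :
    refine dims k r i.castSucc = dims i := by
  rw [refine, ← Fin.succAbove_of_castSucc_lt _ _ (Fin.castSucc_lt_succ_iff.2 h.le),
    Fin.insertNth_apply_succAbove, Function.update_of_ne h.ne]

lemma refine_castSucc_self : refine dims k r k.castSucc = r := by
  rw [refine, ← Fin.succAbove_of_castSucc_lt _ _ Fin.castSucc_lt_succ,
    Fin.insertNth_apply_succAbove, Function.update_self]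

lemma refine_succ_self : refine dims k r k.succ = dims k - r := by
  rw [refine, Fin.insertNth_apply_same]

lemma refine_succ_of_gt {i : Fin (l + 1)} (h : k < i) :
    refine dims k r i.succ = dims i := by
  rw [refine, ← Fin.succAbove_of_le_castSucc _ _ (Fin.succ_le_castSucc_iff.2 h),
    Fin.insertNth_apply_succAbove, Function.update_of_ne h.ne']

lemma bs_refine_of_le {j : ℕ} (hj : j ≤ k) : bs (refine dims k r) j = bs dims j := by
  induction j with
  | zero => simp
  | succ n ih =>
    have hn : n < l + 1 := by omega
    rw [bs_succ (⟨n, by omega⟩ : Fin (l + 2)), bs_succ (⟨n, hn⟩ : Fin (l + 1)), ih (by omega)]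
    exact congrArg _ (refine_castSucc_of_lt (i := ⟨n, hn⟩) (Fin.mk_lt_of_lt_val (by omega)))

lemma bs_refine_succ_self : bs (refine dims k r) (k + 1) = bs dims k + r := by
  have h := bs_succ (dims := refine dims k r) k.castSucc
  rw [Fin.val_castSucc] at h
  rw [h, bs_refine_of_le le_rfl, refine_castSucc_self]

lemma bs_refine_succ_of_gt (hrk : r ≤ dims k) {j : ℕ} (hj : k < j) (hjl : j ≤ l + 1) :
    bs (refine dims k r) (j + 1) = bs dims j := by
  induction j, hj using Nat.le_induction with
  | base =>
    have h := bs_succ (dims := refine dims k r) k.succ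
    rw [Fin.val_succ, bs_refine_succ_self, refine_succ_self] at h
    rw [Nat.succ_eq_add_one, h, bs_succ]
    omega
  | succ n hn ih =>
    have hn1 : n < l + 1 := by omega
    rw [bs_succ (⟨n + 1, by omega⟩ : Fin (l + 2)), ih (by omega),
      bs_succ (⟨n, hn1⟩ : Fin (l + 1))]
    exact congrArg _ (refine_succ_of_gt (i := ⟨n, hn1⟩) (Fin.lt_def.2 (by simp only; omega)))

lemma isCut_refine_iff (hrk : r ≤ dims k) {p : ℕ} :
    IsCut (refine dims k r) p ↔ IsCut dims p ∨ p = bs dims k + r := by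
  constructor
  · rintro ⟨j, hj1, hjl, rfl⟩
    rcases lt_trichotomy j (k + 1) with h | rfl | h
    · exact .inl ⟨j, hj1, by omega, bs_refine_of_le (show j ≤ k by omega)⟩
    · exact .inr bs_refine_succ_self
    · obtain ⟨j, rfl⟩ : ∃ j', j = j' + 1 := ⟨j - 1, by omega⟩
      exact .inl ⟨j, by omega, by omega, bs_refine_succ_of_gt hrk (by omega) (by omega)⟩
  · rintro (⟨j, hj1, hjl, rfl⟩ | rfl)
    · rcases le_or_gt j k with h | h
      · exact ⟨j, hj1, by omega, (bs_refine_of_le h).symm⟩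
      · exact ⟨j + 1, by omega, by omega, (bs_refine_succ_of_gt hrk h (by omega)).symm⟩
    · exact ⟨(k : ℕ) + 1, by omega, by omega, bs_refine_succ_self.symm⟩

end refine

lemma TD.eq_of_isCut {L m d : ℕ} {dims : Fin L → ℕ} {τ : Fin m → ℕ} (hτ : TD dims d τ)
    {i : Fin m} (hi : IsCut dims (i + 1)) : τ i = d + 1 := by
  obtain ⟨j, hj1, hjL, hij⟩ := hi
  exact hτ.2.2 i j hj1 hjL hij

lemma TD.of_isCut {L m d : ℕ} {dims : Fin L → ℕ} {τ : Fin m → ℕ} (h₁ : ∀ i, τ i ≤ d + 1)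
    (h₂ : ∀ j, 1 ≤ j → j ≤ d → ∃ i, τ i = j)
    (h₃ : ∀ i : Fin m, IsCut dims (i + 1) → τ i = d + 1) : TD dims d τ :=
  ⟨h₁, h₂, fun i j hj1 hjL hij => h₃ i ⟨j, hj1, hjL, hij⟩⟩

section TD
variable {L m d : ℕ} {dims : Fin (L + 1) → ℕ} {τ : Fin m → ℕ}

open Classical in
lemma card_not_isCut (hd : ∀ j, 0 < dims j) (hsum : ∑ j, dims j = m + 1) :
    #{i : Fin m | ¬IsCut dims (i + 1)} = m - L := by
  have hlast : bs dims L + dims (Fin.last L) = m + 1 := by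
    have := bs_succ (dims := dims) (Fin.last L)
    rw [Fin.val_last, bs_of_le le_rfl, hsum] at this
    exact this.symm
  have hcut := card_isCut_lt (m := m) hd hsum (hd (Fin.last L)) le_rfl
  simp only [Fin.val_last, hlast, add_lt_add_iff_right, Fin.is_lt, and_true] at hcut
  have := card_filter_add_card_filter_not (s := univ) fun i : Fin m => IsCut dims (i + 1)
  simp only [card_univ, Fintype.card_fin] at this
  omega

open Classical in
lemma TD.image_not_isCut (hd : ∀ j, 0 < dims j) (hsum : ∑ j, dims j = m + 1) (hm : m = d + L)
    (hτ : TD dims d τ) :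
    ({i | ¬IsCut dims (i + 1)} : Finset (Fin m)).image τ = Icc 1 d := by
  refine (eq_of_subset_of_card_le (fun v hv => ?_) ?_).symm
  · obtain ⟨hv1, hvd⟩ := mem_Icc.1 hv
    obtain ⟨i, rfl⟩ := hτ.2.1 v hv1 hvd
    refine mem_image_of_mem τ (mem_filter.2 ⟨mem_univ _, fun hc => ?_⟩)
    have := hτ.eq_of_isCut hc
    omega
  · calc _ ≤ _ := card_image_le
      _ = _ := by rw [card_not_isCut hd hsum, Nat.card_Icc]; omega

lemma TD.le_of_not_isCut (hd : ∀ j, 0 < dims j) (hsum : ∑ j, dims j = m + 1) (hm : m = d + L)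
    (hτ : TD dims d τ) {i : Fin m} (hi : ¬IsCut dims (i + 1)) : τ i ≤ d := by
  classical
  have := hτ.image_not_isCut hd hsum hm ▸ mem_image_of_mem τ (mem_filter.2 ⟨mem_univ i, hi⟩)
  exact (mem_Icc.1 this).2

lemma TD.injOn_not_isCut (hd : ∀ j, 0 < dims j) (hsum : ∑ j, dims j = m + 1) (hm : m = d + L)
    (hτ : TD dims d τ) : Set.InjOn τ {i | ¬IsCut dims (i + 1)} := by
  classical
  have := injOn_of_card_image_eq (s := ({i | ¬IsCut dims (i + 1)} : Finset (Fin m))) (f := τ) (by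
    rw [hτ.image_not_isCut hd hsum hm, Nat.card_Icc, card_not_isCut hd hsum]; omega)
  simpa using this

end TD

open Equiv in
lemma sign_eq_of_apply_eq_last {e : ℕ} {π : Perm (Fin (e + 1))} {π' : Perm (Fin e)}
    {j₀ : Fin (e + 1)} (hlast : π j₀ = Fin.last e)
    (hrest : ∀ t, π (j₀.succAbove t) = (π' t).castSucc) :
    Perm.sign π = (-1) ^ (e - j₀) * Perm.sign π' := by
  -- `π` is `π'`, extended to fix `last`, after the cycle `C` carrying `j₀` to the last place
  set C : Perm (Fin (e + 1)) := Fin.revPerm * Fin.cycleRange j₀.rev * Fin.revPerm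
  have hπ : π = π'.viaFintypeEmbedding Fin.castSuccEmb * C := by
    ext x : 1
    rcases eq_or_ne x j₀ with rfl | hx
    · have : Fin.last e ∉ Set.range (Fin.castSuccEmb (n := e)) := by simp
      simp [C, hlast, Perm.viaFintypeEmbedding_apply_notMem_range _ _ this]
    · obtain ⟨t, rfl⟩ := Fin.exists_succAbove_eq hx
      have hC : C (j₀.succAbove t) = Fin.castSuccEmb t := by
        simp [C, Fin.rev_succAbove, Fin.cycleRange_succAbove, Fin.rev_succ]
      rw [Perm.mul_apply, hC, Perm.viaFintypeEmbedding_apply_image, hrest]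
      rfl
  have hsign_rev : Perm.sign (Fin.revPerm (n := e + 1)) * Perm.sign Fin.revPerm = 1 :=
    Int.units_mul_self _
  rw [hπ, map_mul, Perm.viaFintypeEmbedding_sign, map_mul, map_mul, Fin.sign_cycleRange,
    Fin.val_rev, mul_right_comm, hsign_rev, one_mul, mul_comm]
  congr 2
  omega

open Classical in
lemma val_add_eq_of_range_eq {L m a : ℕ} {dims : Fin (L + 1) → ℕ} (hd : ∀ j, 0 < dims j)
    (hsum : ∑ j, dims j = m + 1) {ϱ : Fin a → Fin m} (hϱ : StrictMono ϱ)
    (hrange : ∀ i, i ∈ Set.range ϱ ↔ ¬IsCut dims (i + 1)) {k : Fin (L + 1)} {r : ℕ}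
    (hr : 0 < r) (hrk : r < dims k) {j₀ : Fin a} (hj₀ : (ϱ j₀ : ℕ) + 1 = bs dims k + r) :
    (j₀ : ℕ) + k + 1 = bs dims k + r := by
  -- the positions before `ϱ j₀` are the `j₀` free ones `ϱ t`, `t < j₀`, and `k` cut points
  have hsplit :=
    card_filter_add_card_filter_not (s := Iio (ϱ j₀)) fun i : Fin m => IsCut dims (i + 1)
  have hcut : #((Iio (ϱ j₀)).filter fun i : Fin m => IsCut dims (i + 1)) = k := by
    rw [← card_isCut_lt hd hsum hr hrk.le]
    congr 1
    ext i
    simp only [mem_filter, mem_Iio, mem_univ, true_and, Fin.lt_def]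
    exact and_comm.trans (and_congr_right fun _ => by omega)
  have hfree : ((Iio (ϱ j₀)).filter fun i : Fin m => ¬IsCut dims (i + 1)) = (Iio j₀).image ϱ := by
    ext i
    simp only [mem_filter, mem_Iio, mem_image, ← hrange]
    constructor
    · rintro ⟨hi, t, rfl⟩
      exact ⟨t, hϱ.lt_iff_lt.1 hi, rfl⟩
    · rintro ⟨t, ht, rfl⟩
      exact ⟨hϱ ht, t, rfl⟩
  rw [hcut, hfree, card_image_of_injective _ hϱ.injective, Fin.card_Iio, Fin.card_Iio] at hsplit
  omega

/-- The paper's `s_c`. -/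
def squash (c v : ℕ) : ℕ := if v ≤ c then v else v - 1

lemma squash_of_le {c v : ℕ} (h : v ≤ c) : squash c v = v := if_pos h

lemma squash_succ (c : ℕ) : squash c (c + 1) = c := by simp [squash]

section squash
variable {L m d : ℕ} {dims : Fin (L + 1) → ℕ} {k : Fin (L + 1)} {r : ℕ}

lemma TD.eq_of_squash_comp_eq (hd : ∀ j, 0 < dims j) (hsum : ∑ j, dims j = m + 1)
    (hm : m = d + L) {τ τ' : Fin m → ℕ} (hτ : TD dims d τ) (hτ' : TD dims d τ')
    (h : squash d ∘ τ = squash d ∘ τ') : τ = τ' := by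
  funext i
  by_cases hc : IsCut dims (i + 1)
  · rw [hτ.eq_of_isCut hc, hτ'.eq_of_isCut hc]
  · simpa [squash_of_le (hτ.le_of_not_isCut hd hsum hm hc),
      squash_of_le (hτ'.le_of_not_isCut hd hsum hm hc)] using congrFun h i

lemma TD.refine_squash {τ : Fin m → ℕ} (hτ : TD dims (d + 1) τ) (hrk : r ≤ dims k)
    (hnew : ∀ i : Fin m, (i : ℕ) + 1 = bs dims k + r → τ i = d + 1) :
    TD (refine dims k r) d (squash (d + 1) ∘ τ) := by
  refine TD.of_isCut (fun i => ?_) (fun j hj1 hjd => ?_) (fun i hi => ?_)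
  · have := hτ.1 i
    simp only [Function.comp_apply, squash]
    split_ifs <;> omega
  · obtain ⟨i, hi⟩ := hτ.2.1 j hj1 (by omega)
    exact ⟨i, by rw [Function.comp_apply, hi, squash_of_le (by omega)]⟩
  · rcases (isCut_refine_iff hrk).1 hi with hc | hc
    · rw [Function.comp_apply, hτ.eq_of_isCut hc, squash_succ]
    · rw [Function.comp_apply, hnew i hc, squash_of_le le_rfl]

lemma exists_TD_squash_comp_eq (hsum : ∑ j, dims j = m + 1) (hr : 0 < r) (hrk : r < dims k)
    {ψ : Fin m → ℕ} (hψ : TD (refine dims k r) d ψ) :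
    ∃ τ : Fin m → ℕ, TD dims (d + 1) τ ∧ squash (d + 1) ∘ τ = ψ := by
  have hψnew {i : Fin m} (hi : (i : ℕ) + 1 = bs dims k + r) : ψ i = d + 1 :=
    hψ.eq_of_isCut ((isCut_refine_iff hrk.le).2 (.inr hi))
  refine ⟨fun i => if (i : ℕ) + 1 = bs dims k + r then d + 1 else if ψ i = d + 1 then d + 2
    else ψ i, TD.of_isCut (fun i => ?_) (fun v hv1 hvd => ?_) (fun i hi => ?_), funext fun i => ?_⟩
  · have := hψ.1 i
    split_ifs <;> omega
  · rcases hvd.eq_or_lt with rfl | hvd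
    · obtain ⟨i, hi⟩ := exists_val_add_one_eq_bs_add hsum hr hrk
      exact ⟨i, if_pos hi⟩
    · obtain ⟨i, hi⟩ := hψ.2.1 v hv1 (by omega)
      have hi' : (i : ℕ) + 1 ≠ bs dims k + r := fun h => by rw [hψnew h] at hi; omega
      exact ⟨i, by simp only [if_neg hi', hi, if_neg hvd.ne]⟩
  · have hi' : (i : ℕ) + 1 ≠ bs dims k + r := fun h => not_isCut_bs_add hr hrk (h ▸ hi)
    simp only [if_neg hi', hψ.eq_of_isCut ((isCut_refine_iff hrk.le).2 (.inl hi)), if_true]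
  · simp only [Function.comp_apply]
    split_ifs with hi hψi
    · rw [squash_of_le le_rfl, hψnew hi]
    · rw [squash_succ, hψi]
    · exact squash_of_le (by have := hψ.1 i; omega)

end squash

section main
variable {L m d : ℕ} {dims : Fin (L + 1) → ℕ} {τ : Fin m → ℕ}

lemma TD.existsUnique_eq_top (hd : ∀ j, 0 < dims j) (hsum : ∑ j, dims j = m + 1)
    (hm : m = d + 1 + L) (hτ : TD dims (d + 1) τ) :
    ∃! q : Fin (L + 1) × ℕ, (0 < q.2 ∧ q.2 < dims q.1) ∧
      ∀ i : Fin m, (i : ℕ) + 1 = bs dims q.1 + q.2 → τ i = d + 1 := by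
  obtain ⟨i₁, hi₁⟩ := hτ.2.1 (d + 1) le_add_self le_rfl
  have hfree₁ : ¬IsCut dims (i₁ + 1) := fun hc => by have := hτ.eq_of_isCut hc; omega
  obtain ⟨k, r, hr, hrk, hkr⟩ := exists_eq_bs_add_of_not_isCut (p := i₁ + 1) (by omega)
    (by rw [bs_of_le le_rfl, hsum]; omega) hfree₁
  refine ⟨(k, r), ⟨⟨hr, hrk⟩, fun i hi => ?_⟩, ?_⟩
  · rwa [show i = i₁ from Fin.ext (by simp only at hi; omega)]
  · rintro ⟨k', r'⟩ ⟨⟨hr', hrk'⟩, hq⟩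
    dsimp only at hr' hrk' hq
    obtain ⟨i', hi'⟩ := exists_val_add_one_eq_bs_add hsum hr' hrk'
    have : i' = i₁ := hτ.injOn_not_isCut hd hsum hm
      (show ¬IsCut dims (i' + 1) by rw [hi']; exact not_isCut_bs_add hr' hrk') hfree₁
      ((hq i' hi').trans hi₁.symm)
    obtain ⟨rfl, rfl⟩ := bs_add_inj hr' hrk' hr hrk (by rw [← hi', this, hkr])
    rfl

open Equiv in
lemma sign_refine_squash (hd : ∀ j, 0 < dims j) (hsum : ∑ j, dims j = m + 1)
    {k : Fin (L + 1)} {r : ℕ} (hr : 0 < r) (hrk : r < dims k)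
    (hnew : ∀ i : Fin m, (i : ℕ) + 1 = bs dims k + r → τ i = d + 1)
    {ϱ : Fin (d + 1) → Fin m} {π : Perm (Fin (d + 1))} {ϱ' : Fin d → Fin m} {π' : Perm (Fin d)}
    (hS : SgnData dims τ ϱ π) (hS' : SgnData (refine dims k r) (squash (d + 1) ∘ τ) ϱ' π') :
    (-1) ^ (bs dims k + r) * Perm.sign π' = (-1) ^ (d + 1 + k) * Perm.sign π := by
  obtain ⟨hϱ, hrange, hval⟩ := hS
  obtain ⟨hϱ', hrange', hval'⟩ := hS'
  have hfree (i : Fin m) : i ∈ Set.range ϱ ↔ ¬IsCut dims (i + 1) :=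
    (hrange i).trans not_isCut_iff.symm
  obtain ⟨i₀, hi₀⟩ := exists_val_add_one_eq_bs_add hsum hr hrk
  obtain ⟨j₀, hj₀⟩ := (hfree i₀).2 (hi₀ ▸ not_isCut_bs_add hr hrk)
  have hϱ' : ϱ' = ϱ ∘ j₀.succAbove := by
    refine (hϱ'.range_inj (hϱ.comp (Fin.strictMono_succAbove j₀))).1 (Set.ext fun i => ?_)
    rw [hrange', ← not_isCut_iff, isCut_refine_iff hrk.le, Set.range_comp, Fin.range_succAbove,
      Set.image_compl_eq_range_sdiff_image hϱ.injective, Set.image_singleton, Set.mem_sdiff, hfree,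
      hj₀, Set.mem_singleton_iff, not_or, ← hi₀, Fin.ext_iff, Nat.add_right_cancel_iff]
  have hlast : π j₀ = Fin.last d := Fin.ext <| by
    have := hval j₀
    rw [hj₀, hnew i₀ hi₀] at this
    simp only [Fin.val_last]
    omega
  have hrest (t : Fin d) : π (j₀.succAbove t) = (π' t).castSucc := Fin.ext <| by
    have h := hval' t
    rw [hϱ', Function.comp_apply, Function.comp_apply, hval,
      squash_of_le (by omega)] at h
    simp only [Fin.val_castSucc]
    omega
  have hidx := val_add_eq_of_range_eq hd hsum hϱ hfree hr hrk (hj₀ ▸ hi₀)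
  rw [sign_eq_of_apply_eq_last hlast hrest, ← mul_assoc, ← pow_add,
    show d + 1 + k + (d - j₀) = bs dims k + r + 2 * (d - j₀) by omega,
    pow_add (-1 : ℤˣ) (bs dims k + r), pow_mul,
    neg_one_sq, one_pow, mul_one]

end main

/-- For `τ ∈ T^{n−l}_𝐧` (here `n = e+l+2`, `l(𝐧) = l+1`,
`n − l(𝐧) = e+1`): there is a unique `(k,r)`, `0 < r < n_k`, with
`τ(b_{k−1}+r) = n−l`; the map `τ ↦ s_{n−l}∘τ` is a bijection onto
`∐_{k,r} T^{n−l−1}_{𝐧[k,r]}`; and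
`sgn_{𝐧[k,r]}(s_{n−l}τ) = (−1)^{n−l−b_{k−1}−r+k−1} sgn_𝐧(τ)`. -/
theorem stmt17 (e l : ℕ) (dims : Fin (l + 1) → ℕ) (hd : ∀ k, 0 < dims k)
    (hsum : ∑ j, dims j = e + l + 2)
    (τ : Fin (e + l + 1) → ℕ) (hτ : TD dims (e + 1) τ) :
    (∃! q : Fin (l + 1) × ℕ, (0 < q.2 ∧ q.2 < dims q.1) ∧
        ∀ i : Fin (e + l + 1), (i : ℕ) + 1 = bs dims (q.1 : ℕ) + q.2 → τ i = e + 1) ∧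
    (∀ τ' : Fin (e + l + 1) → ℕ, TD dims (e + 1) τ' →
      (fun i => if τ i ≤ e + 1 then τ i else τ i - 1) =
        (fun i => if τ' i ≤ e + 1 then τ' i else τ' i - 1) → τ = τ') ∧
    (∀ (k : Fin (l + 1)) (r : ℕ), 0 < r → r < dims k →
      (∀ i : Fin (e + l + 1), (i : ℕ) + 1 = bs dims (k : ℕ) + r → τ i = e + 1) →
      TD (refine dims k r) e (fun i => if τ i ≤ e + 1 then τ i else τ i - 1) ∧
      (∀ (ϱ : Fin (e + 1) → Fin (e + l + 1)) (π : Equiv.Perm (Fin (e + 1)))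
          (ϱ' : Fin e → Fin (e + l + 1)) (π' : Equiv.Perm (Fin e)),
        SgnData dims τ ϱ π →
        SgnData (refine dims k r) (fun i => if τ i ≤ e + 1 then τ i else τ i - 1) ϱ' π' →
        (-1) ^ (bs dims (k : ℕ) + r) * Equiv.Perm.sign π' =
          (-1) ^ (e + 1 + (k : ℕ)) * Equiv.Perm.sign π)) ∧
    (∀ (k : Fin (l + 1)) (r : ℕ), 0 < r → r < dims k →
      ∀ ψ : Fin (e + l + 1) → ℕ, TD (refine dims k r) e ψ →
        ∃ τ' : Fin (e + l + 1) → ℕ, TD dims (e + 1) τ' ∧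
          (fun i => if τ' i ≤ e + 1 then τ' i else τ' i - 1) = ψ) := by
  have hsum' : ∑ j, dims j = e + l + 1 + 1 := hsum
  refine ⟨hτ.existsUnique_eq_top hd hsum' (by omega),
    fun τ' hτ' h => hτ.eq_of_squash_comp_eq hd hsum' (by omega) hτ' h,
    fun k r hr hrk hnew => ⟨hτ.refine_squash hrk.le hnew,
      fun ϱ π ϱ' π' hS hS' => sign_refine_squash hd hsum' hr hrk hnew hS hS'⟩,
    fun k r hr hrk ψ hψ => exists_TD_squash_comp_eq hsum' hr hrk hψ⟩
end
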